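/- Let N ≥ 2 be an integer, y : ℤ/Nℤ → ℂ a function with y(−a) = y(a) for all a, and let 0 ≤ m,k ≤ N⁺ be row and column indices; put d = gcd(k,N) (so d = N when k = 0) and N_d = N/d. If d does not divide m, then the (m,k)-entry of the matrix C_N·Y_N is 0. If m = du and k = dv (so that gcd(v, N_d) = 1), then the (m,k)-entry of C_N·Y_N equals d·ŷ_d(t), where t ∈ ℤ/N_dℤ is the unique residue with v·t ≡ u (mod N_d). -/

import Mathlib

/-- The discrete cosine matrix `C_N`, of size `(N⁺+1) × (N⁺+1)` with `N⁺ = ⌊N/2⌋`. -/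
noncomputable def cosMatrix (N : ℕ) : Matrix (Fin (N / 2 + 1)) (Fin (N / 2 + 1)) ℝ :=
  Matrix.of fun m n =>
    (if (n : ℕ) = 0 ∨ (N % 2 = 0 ∧ (n : ℕ) = N / 2) then (1 / 2 : ℝ) else 1) *
      Real.cos (2 * Real.pi * (m : ℕ) * (n : ℕ) / N)

/-- The matrix `Y_N` attached to an even function `y : ℤ/Nℤ → ℂ`:
its `(i,j)` entry is `y(ij mod N)`, `0 ≤ i,j ≤ N⁺`. -/
def YMat (N : ℕ) (y : ZMod N → ℂ) : Matrix (Fin (N / 2 + 1)) (Fin (N / 2 + 1)) ℂ :=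
  Matrix.of fun i j => y (((i : ℕ) : ZMod N) * ((j : ℕ) : ZMod N))

/-- For a divisor `d` of `N` and `t ∈ ℤ/N_dℤ` (`N_d = N/d`),
`ŷ_d(t) = (1/2)·Σ_{r=1}^{N_d} y(dr mod N)·cos(2πtr/N_d)`. -/
noncomputable def yhat (N d : ℕ) (y : ZMod N → ℂ) (t : ZMod (N / d)) : ℂ :=
  (1 / 2 : ℂ) * ∑ r ∈ Finset.Icc 1 (N / d),
    y (((d * r : ℕ) : ZMod N)) *
      (Real.cos (2 * Real.pi * (ZMod.val t) * r / ((N / d : ℕ) : ℝ)) : ℝ)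

/-!
Folding the weighted sum over `0 ≤ n ≤ N⁺` (the weights `1/2` at the ends compensate for the
reflection `n ↦ N - n`) turns `2·(C_N·Y_N)(m,k)` into the full sum
`∑_{n < N} cos(2πmn/N)·y(kn)`. As `n ↦ y(kn)` has period `N_d`, writing `n = a + jN_d` with
`0 ≤ j < d` leaves the inner sum `∑_j cos(θ + 2πmj/d)`, a sum over `d`-th roots of unity, which
vanishes unless `d ∣ m` and equals `d·cos θ` otherwise. When `m = du`, `k = dv`, the substitution
`r = av` permutes the residues mod `N_d` because `v` is a unit there, and `ua ≡ t·r (mod N_d)`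
turns the remaining sum into one period of the summand of `ŷ_d(t)`.
-/

open Finset Function Real

theorem Finset.sum_range_mul_eq_sum_sum {α : Type*} [AddCommMonoid α] (f : ℕ → α) (M d : ℕ) :
    ∑ n ∈ range (M * d), f n = ∑ j ∈ range d, ∑ a ∈ range M, f (a + j * M) := by
  induction d with
  | zero => simp
  | succ d ih =>
    rw [Nat.mul_succ, sum_range_add, ih, sum_range_succ]
    simp only [add_comm, mul_comm]

theorem sum_range_eq_two_mul_sum_range_half {K : Type*} [Field K] [CharZero K] {N : ℕ}
    (hN : 2 ≤ N) {g : ℕ → K} (hg : ∀ n ≤ N, g (N - n) = g n) :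
    ∑ n ∈ range N, g n =
      2 * ∑ n ∈ range (N / 2 + 1),
        (if n = 0 ∨ (N % 2 = 0 ∧ n = N / 2) then 1 / 2 else 1) * g n := by
  have hreflect : ∑ n ∈ Ico (N / 2 + 1) N, g n = ∑ n ∈ Ico 1 (N - N / 2), g n := by
    have := sum_Ico_reflect g 1 (show N - N / 2 ≤ N + 1 by omega)
    rw [show N + 1 - (N - N / 2) = N / 2 + 1 by omega, Nat.add_sub_cancel] at this
    rw [← this]
    exact sum_congr rfl fun n hn => hg n (by simp at hn; omega)
  have hlow : ∑ n ∈ range N, g n =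
      ∑ n ∈ range (N / 2 + 1), g n + ∑ n ∈ range (N - N / 2), g n - g 0 := by
    rw [← sum_range_add_sum_Ico _ (by omega : N / 2 + 1 ≤ N), hreflect,
      sum_range_eq_add_Ico _ (by omega : 0 < N - N / 2)]
    ring
  have htop : ∑ n ∈ range (N - N / 2), g n =
      ∑ n ∈ range (N / 2 + 1), g n - if N % 2 = 0 then g (N / 2) else 0 := by
    rcases Nat.mod_two_eq_zero_or_one N with h | h
    · rw [if_pos h, show N - N / 2 = N / 2 by omega, sum_range_succ]
      ring
    · rw [if_neg (by omega), show N - N / 2 = N / 2 + 1 by omega, sub_zero]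
  have hweight : ∑ n ∈ range (N / 2 + 1),
      (if n = 0 ∨ (N % 2 = 0 ∧ n = N / 2) then (1 / 2 : K) else 1) * g n =
      ∑ n ∈ range (N / 2 + 1), g n - g 0 / 2 - if N % 2 = 0 then g (N / 2) / 2 else 0 := by
    have hterm (n : ℕ) : (if n = 0 ∨ (N % 2 = 0 ∧ n = N / 2) then (1 / 2 : K) else 1) * g n =
        g n - (if n = 0 then g n / 2 else 0) - if N % 2 = 0 ∧ n = N / 2 then g n / 2 else 0 := by
      split_ifs <;> first | omega | ring
    simp only [hterm, sum_sub_distrib, sum_ite_eq', ite_and]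
    simp
  rw [hweight, hlow, htop]
  split_ifs <;> ring

theorem ZMod.sum_range_natCast {α : Type*} [AddCommMonoid α] (M : ℕ) [NeZero M]
    (G : ZMod M → α) : ∑ a ∈ range M, G a = ∑ x : ZMod M, G x := by
  obtain ⟨n, rfl⟩ : ∃ n, M = n + 1 := Nat.exists_eq_succ_of_ne_zero (NeZero.ne M)
  rw [← Fin.sum_univ_eq_sum_range (fun a => G a)]
  exact Fintype.sum_congr _ _ fun x => congrArg G (ZMod.natCast_zmod_val (n := n + 1) x)

theorem Function.Periodic.sum_range_mul_of_coprime {α : Type*} [AddCommMonoid α] {F : ℕ → α}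
    {M v : ℕ} (hF : Periodic F M) (hv : v.Coprime M) :
    ∑ a ∈ range M, F (a * v) = ∑ a ∈ range M, F a := by
  rcases eq_or_ne M 0 with rfl | hM
  · simp
  have : NeZero M := ⟨hM⟩
  have hG (n : ℕ) : F n = F (n : ZMod M).val := by rw [ZMod.val_natCast, hF.map_mod_nat]
  let u : (ZMod M)ˣ := ZMod.unitOfCoprime v hv
  simp_rw [hG (_ * v), Nat.cast_mul]
  conv_rhs => rw [sum_congr rfl fun a _ => hG a]
  rw [ZMod.sum_range_natCast M (fun x => F (x * v).val), ZMod.sum_range_natCast M (F ·.val)]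
  exact Fintype.sum_bijective (· * (u : ZMod M)) (Units.mulRight_bijective u) _ _ fun x => rfl

theorem Function.Periodic.sum_Icc_one_eq_sum_range {α : Type*} [AddCommMonoid α] {F : ℕ → α}
    {M : ℕ} (hF : Periodic F M) : ∑ r ∈ Icc 1 M, F r = ∑ r ∈ range M, F r := by
  have h0 : F M = F 0 := by simpa using hF 0
  rw [← Ico_add_one_right_eq_Icc, sum_Ico_eq_sum_range, Nat.add_sub_cancel]
  cases M with
  | zero => simp
  | succ M => rw [sum_range_succ, sum_range_succ', add_comm 1 M, h0]; simp only [add_comm 1]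

theorem periodic_comp_natCast_mul {α : Type*} {N M k : ℕ} (f : ZMod N → α) (h : N ∣ M * k) :
    Periodic (fun n : ℕ => f ((k * n : ℕ) : ZMod N)) M := by
  intro n
  simp only [mul_add, mul_comm k M, Nat.cast_add, (ZMod.natCast_eq_zero_iff _ _).mpr h, add_zero]

theorem IsPrimitiveRoot.sum_pow_mul_eq_ite {R : Type*} [CommRing R] [IsDomain R] {ζ : R} {d : ℕ}
    (hζ : IsPrimitiveRoot ζ d) (m : ℕ) :
    ∑ j ∈ range d, ζ ^ (m * j) = if d ∣ m then (d : R) else 0 := by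
  simp_rw [pow_mul]
  split_ifs with hdm
  · simp [(hζ.pow_eq_one_iff_dvd m).mpr hdm]
  · have hne : ζ ^ m ≠ 1 := mt (hζ.pow_eq_one_iff_dvd m).mp hdm
    refine eq_zero_of_ne_zero_of_mul_left_eq_zero (sub_ne_zero_of_ne hne.symm) ?_
    rw [mul_neg_geom_sum, ← pow_mul, mul_comm, pow_mul, hζ.pow_eq_one, one_pow, sub_self]

theorem sum_cos_add_two_pi_mul_div {d : ℕ} (hd : d ≠ 0) (m : ℕ) (θ : ℝ) :
    ∑ j ∈ range d, cos (θ + 2 * π * m * j / d) = if d ∣ m then d * cos θ else 0 := by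
  have hζ := Complex.isPrimitiveRoot_exp d hd
  have hterm (j : ℕ) : Complex.exp (↑(θ + 2 * π * m * j / d) * Complex.I) =
      Complex.exp (θ * Complex.I) * Complex.exp (2 * π * Complex.I / d) ^ (m * j) := by
    rw [← Complex.exp_nat_mul, ← Complex.exp_add]
    push_cast
    ring_nf
  have := congrArg Complex.re
    (congrArg (Complex.exp (θ * Complex.I) * ·) (hζ.sum_pow_mul_eq_ite m))
  simp only [mul_sum, ← hterm, Complex.re_sum, Complex.exp_ofReal_mul_I_re] at this
  rw [this]
  split_ifs
  · simp [Complex.exp_ofReal_mul_I_re, mul_comm (d : ℝ)]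
  · simp

theorem periodic_cos_two_pi_mul_div (c M : ℕ) :
    Periodic (fun n : ℕ => cos (2 * π * c * n / M)) M := by
  intro n
  rcases eq_or_ne M 0 with rfl | hM
  · simp
  dsimp only
  rw [show 2 * π * c * ↑(n + M) / M = 2 * π * c * n / M + c * (2 * π) by push_cast; field_simp,
    cos_add_nat_mul_two_pi]

theorem cos_two_pi_div_eq_of_natCast_eq {M a b : ℕ} (h : (a : ZMod M) = b) :
    cos (2 * π * a / M) = cos (2 * π * b / M) := by
  have hper := periodic_cos_two_pi_mul_div 1 M
  have ha := hper.map_mod_nat a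
  have hb := hper.map_mod_nat b
  rw [ZMod.natCast_eq_natCast_iff'] at h
  rw [h] at ha
  simp only [Nat.cast_one, mul_one] at ha hb
  rw [← ha, hb]

theorem cos_two_pi_mul_sub_div (m : ℕ) {N n : ℕ} (hn : n ≤ N) :
    cos (2 * π * m * ↑(N - n) / N) = cos (2 * π * m * n / N) := by
  rcases eq_or_ne N 0 with rfl | hN
  · simp
  rw [Nat.cast_sub hn, show 2 * π * m * (N - n : ℝ) / N = m * (2 * π) - 2 * π * m * n / N by
    field_simp, cos_nat_mul_two_pi_sub]

theorem sum_range_cos_mul_eq_ite {M d N : ℕ} (hN : M * d = N) (hd : d ≠ 0) (m : ℕ) {F : ℕ → ℂ}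
    (hF : Periodic F M) :
    ∑ n ∈ range N, (cos (2 * π * m * n / N) : ℂ) * F n =
      if d ∣ m then d * ∑ a ∈ range M, (cos (2 * π * m * a / N) : ℂ) * F a else 0 := by
  subst hN
  rcases eq_or_ne M 0 with rfl | hM
  · simp
  have hsplit (a j : ℕ) : cos (2 * π * m * ↑(a + j * M) / ↑(M * d)) =
      cos (2 * π * m * a / ↑(M * d) + 2 * π * m * j / d) := by
    push_cast
    field_simp
  have hFj (a j : ℕ) : F (a + j * M) = F a := hF.nat_mul j a
  rw [sum_range_mul_eq_sum_sum, sum_comm]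
  simp only [hsplit, hFj, ← sum_mul]
  simp_rw [← Complex.ofReal_sum, sum_cos_add_two_pi_mul_div hd]
  split_ifs <;> simp [mul_sum, mul_assoc]

theorem two_mul_cosMatrix_mul_YMat_apply {N : ℕ} (hN : 2 ≤ N) {y : ZMod N → ℂ}
    (hy : ∀ a : ZMod N, y (-a) = y a) (m k : Fin (N / 2 + 1)) :
    2 * ((cosMatrix N).map (fun r => (r : ℂ)) * YMat N y) m k =
      ∑ n ∈ range N, (cos (2 * π * (m : ℕ) * n / N) : ℂ) * y ((k * n : ℕ) : ZMod N) := by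
  rw [sum_range_eq_two_mul_sum_range_half hN, Matrix.mul_apply, ← Fin.sum_univ_eq_sum_range]
  · refine congrArg _ (sum_congr rfl fun n _ => ?_)
    simp only [Matrix.map_apply, cosMatrix, YMat, Matrix.of_apply, Nat.cast_mul]
    push_cast [apply_ite (fun r : ℝ => (r : ℂ))]
    rw [mul_comm ((k : ℕ) : ZMod N)]
    ring
  · intro n hn
    rw [cos_two_pi_mul_sub_div _ hn, Nat.mul_sub, Nat.cast_sub (Nat.mul_le_mul_left _ hn),
      Nat.cast_mul _ N, ZMod.natCast_self, mul_zero, zero_sub, hy]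

theorem sum_range_cos_mul_eq_two_mul_yhat {N d m k u v : ℕ} (hN : N ≠ 0) (hdN : d ∣ N)
    (y : ZMod N → ℂ) (hm : m = d * u) (hk : k = d * v) (hv : v.Coprime (N / d))
    (t : ZMod (N / d)) (hvt : (v : ZMod (N / d)) * t = u) :
    ∑ a ∈ range (N / d), (cos (2 * π * m * a / N) : ℂ) * y ((k * a : ℕ) : ZMod N) =
      2 * yhat N d y t := by
  have hd : 0 < d := Nat.pos_of_dvd_of_pos hdN (Nat.pos_of_ne_zero hN)
  have : NeZero (N / d) := ⟨(Nat.div_pos (Nat.le_of_dvd (Nat.pos_of_ne_zero hN) hdN) hd).ne'⟩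
  have hF : Periodic (fun r : ℕ => y ((d * r : ℕ) : ZMod N) *
      (cos (2 * π * t.val * r / (N / d : ℕ)) : ℂ)) (N / d) :=
    (periodic_comp_natCast_mul y (Nat.div_mul_cancel hdN).symm.dvd).mul
      ((periodic_cos_two_pi_mul_div t.val (N / d)).comp ((↑) : ℝ → ℂ))
  have hterm (a : ℕ) : (cos (2 * π * m * a / N) : ℂ) * y ((k * a : ℕ) : ZMod N) =
      y ((d * (a * v) : ℕ) : ZMod N) * (cos (2 * π * t.val * ↑(a * v) / (N / d : ℕ)) : ℂ) := by
    rw [mul_comm, hk, show d * v * a = d * (a * v) by ring]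
    congr 2
    calc cos (2 * π * m * a / N) = cos (2 * π * ↑(u * a) / (N / d : ℕ)) := by
          rw [hm, Nat.cast_div hdN (by exact_mod_cast hd.ne')]; push_cast; field_simp
      _ = cos (2 * π * ↑(t.val * (a * v)) / (N / d : ℕ)) := cos_two_pi_div_eq_of_natCast_eq <| by
          push_cast; rw [ZMod.natCast_val, ZMod.cast_id', id, ← hvt]; ring
      _ = cos (2 * π * t.val * ↑(a * v) / (N / d : ℕ)) := by push_cast; ring_nf
  rw [yhat, hF.sum_Icc_one_eq_sum_range, ← hF.sum_range_mul_of_coprime hv]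
  simp_rw [hterm]
  ring

/-- Entry structure of `C_N·Y_N` for even `y`: with `d = gcd(k,N)`, the `(m,k)` entry
vanishes unless `d ∣ m`, and if `m = du`, `k = dv` then it equals `d·ŷ_d(t)` where `t`
is the unique residue mod `N_d = N/d` with `v·t ≡ u (mod N_d)`. -/
theorem cosMatrix_mul_YMat_apply (N : ℕ) (hN : 2 ≤ N) (y : ZMod N → ℂ)
    (hy : ∀ a : ZMod N, y (-a) = y a) (m k : Fin (N / 2 + 1)) :
    (¬ (Nat.gcd (k : ℕ) N ∣ (m : ℕ)) →
      ((cosMatrix N).map (fun r => (r : ℂ)) * YMat N y) m k = 0) ∧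
    (∀ u v : ℕ, (m : ℕ) = Nat.gcd (k : ℕ) N * u → (k : ℕ) = Nat.gcd (k : ℕ) N * v →
      ∀ t : ZMod (N / Nat.gcd (k : ℕ) N),
        (v : ZMod (N / Nat.gcd (k : ℕ) N)) * t = (u : ZMod (N / Nat.gcd (k : ℕ) N)) →
        ((cosMatrix N).map (fun r => (r : ℂ)) * YMat N y) m k =
          (Nat.gcd (k : ℕ) N : ℂ) * yhat N (Nat.gcd (k : ℕ) N) y t) := by
  have hd : 0 < Nat.gcd (k : ℕ) N := Nat.gcd_pos_of_pos_right _ (by omega)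
  have hdN : Nat.gcd (k : ℕ) N ∣ N := Nat.gcd_dvd_right _ _
  have hNk : N ∣ N / Nat.gcd (k : ℕ) N * k :=
    (Nat.div_mul_cancel hdN).symm.dvd.trans (Nat.mul_dvd_mul_left _ (Nat.gcd_dvd_left _ _))
  have hsum := sum_range_cos_mul_eq_ite (Nat.div_mul_cancel hdN) hd.ne' m
    (periodic_comp_natCast_mul y hNk)
  rw [← two_mul_cosMatrix_mul_YMat_apply hN hy] at hsum
  have hcop := Nat.coprime_div_gcd_div_gcd hd
  generalize Nat.gcd (k : ℕ) N = d at hd hdN hsum hcop ⊢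
  refine ⟨fun hdm => ?_, fun u v hmu hkv t hvt => ?_⟩
  · rw [if_neg hdm] at hsum
    linear_combination hsum / 2
  · rw [hkv, Nat.mul_div_cancel_left _ hd] at hcop
    rw [if_pos (Dvd.intro u hmu.symm),
      sum_range_cos_mul_eq_two_mul_yhat (by omega) hdN y hmu hkv hcop t hvt] at hsum
    linear_combination hsum / 2
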